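/- arXiv:2103.07196 — 3 statements merged into one kernel-verified Lean document; each statement's English description precedes it below -/
import Mathlib

section
/- The divergence operator maps the Brezzi-Douglas-Marini space BDM_k(K̂) = (P_k(K̂))² ⊕ span{curl(x^{k+1}y), curl(xy^{k+1})} onto P_{k-1}(K̂); that is, div BDM_k(K̂) = P_{k-1}(K̂). -/
/-!
The curl fields are divergence free because mixed partial derivatives commute, and the divergence
of a field in `(P_k)²` has degree at most `k - 1`. Conversely, every `f ∈ P_{k-1}` is the
divergence of `(F, 0)`, where `F ∈ P_k` is an antiderivative of `f` in `x`.
-/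

open MvPolynomial

noncomputable section

def Qset (p q : ℕ) : Set (MvPolynomial (Fin 2) ℝ) :=
  {f | f.degreeOf 0 ≤ p ∧ f.degreeOf 1 ≤ q}

def Pset (k : ℕ) : Set (MvPolynomial (Fin 2) ℝ) :=
  {f | f.totalDegree ≤ k}

def pdiv (v : MvPolynomial (Fin 2) ℝ × MvPolynomial (Fin 2) ℝ) : MvPolynomial (Fin 2) ℝ :=
  pderiv 0 v.1 + pderiv 1 v.2

def pcurl (f : MvPolynomial (Fin 2) ℝ) :
    MvPolynomial (Fin 2) ℝ × MvPolynomial (Fin 2) ℝ :=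
  (pderiv 1 f, -(pderiv 0 f))

def RTset (k : ℕ) : Set (MvPolynomial (Fin 2) ℝ × MvPolynomial (Fin 2) ℝ) :=
  (Qset (k + 1) k) ×ˢ (Qset k (k + 1))

def BDMset (k : ℕ) : Set (MvPolynomial (Fin 2) ℝ × MvPolynomial (Fin 2) ℝ) :=
  {v | ∃ p₁ ∈ Pset k, ∃ p₂ ∈ Pset k, ∃ a b : ℝ,
    v = (p₁, p₂) + a • pcurl (X 0 ^ (k + 1) * X 1) + b • pcurl (X 0 * X 1 ^ (k + 1))}

namespace MvPolynomial

section CommSemiring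

variable {σ R : Type*} [CommSemiring R]

theorem pderiv_comm (i j : σ) (f : MvPolynomial σ R) :
    pderiv i (pderiv j f) = pderiv j (pderiv i f) := by
  classical
  induction f using MvPolynomial.induction_on with
  | C a => simp
  | add p q hp hq => simp only [map_add, hp, hq]
  | mul_X p s hp =>
    simp only [pderiv_mul, map_add, hp, pderiv_X, Pi.single_apply]
    split_ifs <;> simp; ring

theorem totalDegree_pderiv_le (i : σ) (f : MvPolynomial σ R) :
    (pderiv i f).totalDegree ≤ f.totalDegree - 1 := by
  conv_lhs => rw [f.as_sum, map_sum]
  refine totalDegree_finsetSum_le fun m hm => ?_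
  rw [pderiv_monomial]
  by_cases hmi : m i = 0
  · simp [hmi]
  have hm_eq : m - Finsupp.single i 1 + Finsupp.single i 1 = m :=
    tsub_add_cancel_of_le (Finsupp.single_le_iff.2 (Nat.one_le_iff_ne_zero.2 hmi))
  have hdeg : (m - Finsupp.single i 1).degree + 1 = m.degree := by
    conv_rhs => rw [← hm_eq, map_add, Finsupp.degree_single]
  have hm_le : m.degree ≤ f.totalDegree := le_totalDegree hm
  refine (totalDegree_monomial_le _ _).trans ?_
  change (m - Finsupp.single i 1).degree ≤ _
  omega

end CommSemiring

section Field

variable {σ R : Type*} [Field R]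

def antideriv (i : σ) (f : MvPolynomial σ R) : MvPolynomial σ R :=
  ∑ m ∈ f.support, monomial (m + Finsupp.single i 1) (coeff m f / (m i + 1))

theorem pderiv_antideriv [CharZero R] (i : σ) (f : MvPolynomial σ R) :
    pderiv i (antideriv i f) = f := by
  classical
  rw [antideriv, map_sum]
  conv_rhs => rw [← f.support_sum_monomial_coeff]
  refine Finset.sum_congr rfl fun m _ => ?_
  rw [pderiv_monomial, add_tsub_cancel_right, Finsupp.add_apply, Finsupp.single_eq_same]
  congr 1
  push_cast
  field_simp

theorem totalDegree_antideriv_le (i : σ) (f : MvPolynomial σ R) :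
    (antideriv i f).totalDegree ≤ f.totalDegree + 1 := by
  refine totalDegree_finsetSum_le fun m hm => (totalDegree_monomial_le _ _).trans ?_
  change (m + Finsupp.single i 1).degree ≤ _
  rw [map_add, Finsupp.degree_single]
  exact Nat.add_le_add_right (le_totalDegree hm) 1

end Field

end MvPolynomial

theorem pdiv_add (v w : MvPolynomial (Fin 2) ℝ × MvPolynomial (Fin 2) ℝ) :
    pdiv (v + w) = pdiv v + pdiv w := by
  simp only [pdiv, Prod.fst_add, Prod.snd_add, map_add]
  ring

theorem pdiv_smul (a : ℝ) (v : MvPolynomial (Fin 2) ℝ × MvPolynomial (Fin 2) ℝ) :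
    pdiv (a • v) = a • pdiv v := by
  simp only [pdiv, Prod.smul_fst, Prod.smul_snd, Derivation.map_smul, smul_add]

theorem pdiv_pcurl (f : MvPolynomial (Fin 2) ℝ) : pdiv (pcurl f) = 0 := by
  simp [pdiv, pcurl, pderiv_comm 0 1 f]

theorem pdiv_mem_Pset_of_mem_BDMset {k : ℕ}
    {v : MvPolynomial (Fin 2) ℝ × MvPolynomial (Fin 2) ℝ} (hv : v ∈ BDMset k) :
    pdiv v ∈ Pset (k - 1) := by
  obtain ⟨p₁, hp₁, p₂, hp₂, a, b, rfl⟩ := hv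
  simp only [pdiv_add, pdiv_smul, pdiv_pcurl, smul_zero, add_zero]
  refine (totalDegree_add _ _).trans (max_le ?_ ?_)
  · exact (totalDegree_pderiv_le 0 p₁).trans (Nat.sub_le_sub_right hp₁ 1)
  · exact (totalDegree_pderiv_le 1 p₂).trans (Nat.sub_le_sub_right hp₂ 1)

theorem mk_mem_BDMset {k : ℕ} {p₁ p₂ : MvPolynomial (Fin 2) ℝ} (hp₁ : p₁ ∈ Pset k)
    (hp₂ : p₂ ∈ Pset k) : (p₁, p₂) ∈ BDMset k :=
  ⟨p₁, hp₁, p₂, hp₂, 0, 0, by simp⟩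

/-- div BDM_k(K̂) = P_{k-1}(K̂) for k ≥ 1. -/
theorem div_BDM_eq_P (k : ℕ) (hk : 1 ≤ k) : pdiv '' BDMset k = Pset (k - 1) := by
  refine Set.Subset.antisymm (Set.image_subset_iff.2 fun _ => pdiv_mem_Pset_of_mem_BDMset) ?_
  intro f hf
  have hF : antideriv 0 f ∈ Pset k := by
    have hf' : f.totalDegree ≤ k - 1 := hf
    exact (totalDegree_antideriv_le 0 f).trans (by omega)
  refine ⟨(antideriv 0 f, 0), mk_mem_BDMset hF (by simp [Pset]), ?_⟩
  simp [pdiv, pderiv_antideriv]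
end
end

section
/- The divergence of the Arnold-Boffi-Falk space ABF_k(K̂) = Q_{k+2,k}(K̂) × Q_{k,k+2}(K̂) equals the subspace of Q_{k+1}(K̂) spanned by all monomials x^i y^j with (i,j) ≠ (k+1,k+1), 0 ≤ i,j ≤ k+1; in particular the monomial x^{k+1}y^{k+1} is not in div ABF_k(K̂). -/
open MvPolynomial

noncomputable section

/-- The Arnold–Boffi–Falk space ABF_k = Q_{k+2,k} × Q_{k,k+2}. -/
def ABFset (k : ℕ) : Set (MvPolynomial (Fin 2) ℝ × MvPolynomial (Fin 2) ℝ) :=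
  (Qset (k + 2) k) ×ˢ (Qset k (k + 2))

/- ### Auxiliary material -/

local notation "P2" => MvPolynomial (Fin 2) ℝ

lemma exp_le_degreeOf' {f : P2} {m : Fin 2 →₀ ℕ} (hm : m ∈ f.support) (n : Fin 2) :
    m n ≤ f.degreeOf n :=
  (degreeOf_le_iff.mp le_rfl) m hm

lemma degreeOf_monomial_le' (s : Fin 2 →₀ ℕ) (a : ℝ) (n : Fin 2) :
    degreeOf n (monomial s a) ≤ s n := by
  rw [degreeOf_le_iff]
  intro m hm
  rcases Finset.mem_singleton.mp (support_monomial_subset hm) with rfl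
  exact le_rfl

lemma degreeOf_pderiv_le' (f : P2) (n i : Fin 2) :
    degreeOf n (pderiv i f) ≤ degreeOf n f := by
  conv_lhs => rw [f.as_sum]
  rw [map_sum]
  refine (degreeOf_sum_le _ _ _).trans (Finset.sup_le ?_)
  intro m hm
  rw [pderiv_monomial]
  refine (degreeOf_monomial_le' _ _ _).trans ?_
  refine le_trans ?_ (exp_le_degreeOf' hm n)
  rw [Finsupp.tsub_apply]
  exact Nat.sub_le _ _

lemma degreeOf_pderiv_lt' (f : P2) (i : Fin 2) :
    degreeOf i (pderiv i f) ≤ degreeOf i f - 1 := by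
  conv_lhs => rw [f.as_sum]
  rw [map_sum]
  refine (degreeOf_sum_le _ _ _).trans (Finset.sup_le ?_)
  intro m hm
  rw [pderiv_monomial]
  refine (degreeOf_monomial_le' _ _ _).trans ?_
  rw [Finsupp.tsub_apply, Finsupp.single_apply, if_pos rfl]
  exact Nat.sub_le_sub_right (exp_le_degreeOf' hm i) 1

/-- Q_{p,q} as a submodule. -/
def QSub (p q : ℕ) : Submodule ℝ P2 where
  carrier := {f | f.degreeOf 0 ≤ p ∧ f.degreeOf 1 ≤ q}
  zero_mem' := by simp [degreeOf_zero]
  add_mem' := by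
    rintro a b ⟨ha0, ha1⟩ ⟨hb0, hb1⟩
    exact ⟨(degreeOf_add_le _ _ _).trans (max_le ha0 hb0),
      (degreeOf_add_le _ _ _).trans (max_le ha1 hb1)⟩
  smul_mem' := by
    rintro c f ⟨h0, h1⟩
    rw [Set.mem_setOf_eq, smul_eq_C_mul]
    exact ⟨(degreeOf_C_mul_le _ _ _).trans h0, (degreeOf_C_mul_le _ _ _).trans h1⟩

def Ldiv : (P2 × P2) →ₗ[ℝ] P2 :=
  (pderiv (0 : Fin 2)).toLinearMap ∘ₗ LinearMap.fst ℝ P2 P2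
    + (pderiv (1 : Fin 2)).toLinearMap ∘ₗ LinearMap.snd ℝ P2 P2

lemma Ldiv_apply (v : P2 × P2) : Ldiv v = pderiv 0 v.1 + pderiv 1 v.2 := rfl

lemma mem_span_monomials {S : Set P2} {f : P2}
    (h : ∀ m ∈ f.support, (X 0 ^ m 0 * X 1 ^ m 1 : P2) ∈ S) :
    f ∈ Submodule.span ℝ S := by
  rw [show f = ∑ m ∈ f.support, monomial m (coeff m f) from f.as_sum]
  refine Submodule.sum_mem _ fun m hm => ?_
  have hm2 : (Finsupp.single 0 (m 0) + Finsupp.single 1 (m 1) : Fin 2 →₀ ℕ) = m := by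
    ext a; fin_cases a <;> simp
  have : (monomial m) (coeff m f) = (coeff m f) • (X 0 ^ m 0 * X 1 ^ m 1 : P2) := by
    rw [smul_eq_C_mul, X_pow_eq_monomial, X_pow_eq_monomial, monomial_mul, C_mul_monomial,
      mul_one, hm2, mul_one]
  rw [this]
  exact Submodule.smul_mem _ _ (Submodule.subset_span (h m hm))

lemma XiXj_eq (i j : ℕ) :
    (X 0 ^ i * X 1 ^ j : P2) = monomial (Finsupp.single 0 i + Finsupp.single 1 j) 1 := by
  rw [X_pow_eq_monomial, X_pow_eq_monomial, monomial_mul, one_mul]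

/-- div ABF_k(K̂) is the span of the monomials x^i y^j, 0 ≤ i,j ≤ k+1, (i,j) ≠ (k+1,k+1);
in particular x^{k+1} y^{k+1} ∉ div ABF_k(K̂). -/
theorem div_ABF_eq (k : ℕ) :
    pdiv '' ABFset k =
      ↑(Submodule.span ℝ {f : MvPolynomial (Fin 2) ℝ |
        ∃ i ≤ k + 1, ∃ j ≤ k + 1, (i, j) ≠ (k + 1, k + 1) ∧ f = X 0 ^ i * X 1 ^ j}) ∧
    (X 0 ^ (k + 1) * X 1 ^ (k + 1) : MvPolynomial (Fin 2) ℝ) ∉ pdiv '' ABFset k := by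
  set S : Set P2 := {f : MvPolynomial (Fin 2) ℝ |
      ∃ i ≤ k + 1, ∃ j ≤ k + 1, (i, j) ≠ (k + 1, k + 1) ∧ f = X 0 ^ i * X 1 ^ j} with hS
  have himg : pdiv '' ABFset k
      = ↑(Submodule.map Ldiv ((QSub (k + 2) k).prod (QSub k (k + 2)))) := by
    rw [Submodule.map_coe, Submodule.prod_coe]
    rfl
  have hmod : Submodule.map Ldiv ((QSub (k + 2) k).prod (QSub k (k + 2)))
      = Submodule.span ℝ S := by
    refine le_antisymm ?_ ?_
    · rintro f ⟨v, hv, rfl⟩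
      obtain ⟨hv1, hv2⟩ := Submodule.mem_prod.mp hv
      obtain ⟨h10, h11⟩ := hv1
      obtain ⟨h20, h21⟩ := hv2
      rw [Ldiv_apply]
      refine Submodule.add_mem _ (mem_span_monomials ?_) (mem_span_monomials ?_)
      · intro m hm
        have e0 : m 0 ≤ k + 1 :=
          (exp_le_degreeOf' hm 0).trans ((degreeOf_pderiv_lt' _ 0).trans (by omega))
        have e1 : m 1 ≤ k :=
          (exp_le_degreeOf' hm 1).trans ((degreeOf_pderiv_le' _ 1 0).trans h11)
        exact ⟨m 0, e0, m 1, e1.trans (by omega), by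
          simp only [ne_eq, Prod.mk.injEq, not_and]; omega, rfl⟩
      · intro m hm
        have e0 : m 0 ≤ k :=
          (exp_le_degreeOf' hm 0).trans ((degreeOf_pderiv_le' _ 0 1).trans h20)
        have e1 : m 1 ≤ k + 1 :=
          (exp_le_degreeOf' hm 1).trans ((degreeOf_pderiv_lt' _ 1).trans (by omega))
        exact ⟨m 0, e0.trans (by omega), m 1, e1, by
          simp only [ne_eq, Prod.mk.injEq, not_and]; omega, rfl⟩
    · rw [Submodule.span_le]
      rintro f ⟨i, hi, j, hj, hne, rfl⟩
      rw [SetLike.mem_coe, Submodule.mem_map]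
      by_cases hjk : j ≤ k
      · refine ⟨(monomial (Finsupp.single 0 (i + 1) + Finsupp.single 1 j)
          (((i : ℝ) + 1)⁻¹), 0), ?_, ?_⟩
        · refine Submodule.mem_prod.mpr ⟨⟨?_, ?_⟩, Submodule.zero_mem _⟩
          · refine (degreeOf_monomial_le' _ _ 0).trans ?_
            simp [Finsupp.single_apply]
            omega
          · refine (degreeOf_monomial_le' _ _ 1).trans ?_
            simp [Finsupp.single_apply]
            omega
        · rw [Ldiv_apply]
          simp only [map_zero, add_zero, pderiv_monomial]
          rw [XiXj_eq]
          have hs : (Finsupp.single 0 (i + 1) + Finsupp.single 1 j)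
              - Finsupp.single (0 : Fin 2) 1 = Finsupp.single 0 i + Finsupp.single 1 j := by
            ext a; fin_cases a <;> simp
          have hc : ((Finsupp.single 0 (i + 1) + Finsupp.single 1 j : Fin 2 →₀ ℕ)) 0
              = i + 1 := by simp
          rw [hs, hc]
          congr 1
          push_cast
          field_simp
      · have hj' : j = k + 1 := by omega
        have hik : i ≤ k := by
          rcases Nat.lt_or_ge i (k + 1) with h | h
          · omega
          · exact absurd (Prod.ext (by omega) (by omega)) hne
        refine ⟨(0, monomial (Finsupp.single 0 i + Finsupp.single 1 (j + 1))
          (((j : ℝ) + 1)⁻¹)), ?_, ?_⟩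
        · refine Submodule.mem_prod.mpr ⟨Submodule.zero_mem _, ⟨?_, ?_⟩⟩
          · refine (degreeOf_monomial_le' _ _ 0).trans ?_
            simp [Finsupp.single_apply]
            omega
          · refine (degreeOf_monomial_le' _ _ 1).trans ?_
            simp [Finsupp.single_apply]
            omega
        · rw [Ldiv_apply]
          simp only [map_zero, zero_add, pderiv_monomial]
          rw [XiXj_eq]
          have hs : (Finsupp.single 0 i + Finsupp.single 1 (j + 1))
              - Finsupp.single (1 : Fin 2) 1 = Finsupp.single 0 i + Finsupp.single 1 j := by
            ext a; fin_cases a <;> simp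
          have hc : ((Finsupp.single 0 i + Finsupp.single 1 (j + 1) : Fin 2 →₀ ℕ)) 1
              = j + 1 := by simp
          rw [hs, hc]
          congr 1
          push_cast
          field_simp
  have heq : pdiv '' ABFset k = ↑(Submodule.span ℝ S) := by rw [himg, hmod]
  refine ⟨heq, ?_⟩
  rw [heq]
  intro hmem
  rw [SetLike.mem_coe] at hmem
  set m0 : Fin 2 →₀ ℕ := Finsupp.single 0 (k + 1) + Finsupp.single 1 (k + 1) with hm0
  have hzero : coeff m0 (X 0 ^ (k + 1) * X 1 ^ (k + 1) : P2) = 0 := by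
    refine Submodule.span_induction (p := fun g _ => coeff m0 g = 0) ?_ ?_ ?_ ?_ hmem
    · rintro f ⟨i, hi, j, hj, hne, rfl⟩
      rw [XiXj_eq, coeff_monomial, if_neg]
      intro h
      apply hne
      have h0 := DFunLike.congr_fun h 0
      have h1 := DFunLike.congr_fun h 1
      simp [hm0] at h0 h1
      exact Prod.ext h0 h1
    · simp
    · intro x y _ _ hx hy; rw [coeff_add, hx, hy, add_zero]
    · intro a x _ hx; rw [coeff_smul, hx, smul_zero]
  rw [XiXj_eq, ← hm0, coeff_monomial, if_pos rfl] at hzero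
  exact one_ne_zero hzero
end
end

section
/- The ABF interpolation operator Î_{ABF} satisfies the commuting diagram property div(Î_{ABF} v) = Π(div v) for all v ∈ C¹(K̂)², where Π is the L²-projection onto div ABF_k(K̂). -/
/-!
Write `e = Î v − v`. For `q ∈ Q_k`, Green's formula turns `∫ div e · q` into edge integrals of
`e · n` against the traces `q|_F ∈ P_k(F)` and the volume integral of `e · ∇q` with
`∇q ∈ Q_{k-1,k} × Q_{k,k-1}`; all of them vanish by the edge and interior moments. With the
divergence moments against `x^i y^{k+1}` and `x^{k+1} y^j`, `div e` is then L²-orthogonal to every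
monomial spanning `div ABF_k`. As `div Î v ∈ div ABF_k`, the difference `div Î v − Π div v` lies in
`div ABF_k` and is orthogonal to itself, hence vanishes.
-/

open MeasureTheory
open scoped ENNReal NNReal

noncomputable section

/-- The reference square K̂ = [0,1]². -/
def Khat : Set (ℝ × ℝ) := Set.Icc (0, 0) (1, 1)

/-- Lebesgue measure restricted to K̂. -/
def μK : Measure (ℝ × ℝ) := volume.restrict Khat

/-- Partial derivative in the x-direction. -/
def pdx (w : ℝ × ℝ → ℝ) : ℝ × ℝ → ℝ := fun z => fderiv ℝ w z (1, 0)

/-- Partial derivative in the y-direction. -/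
def pdy (w : ℝ × ℝ → ℝ) : ℝ × ℝ → ℝ := fun z => fderiv ℝ w z (0, 1)

/-- Divergence of a vector field. -/
def divg (u : ℝ × ℝ → ℝ × ℝ) : ℝ × ℝ → ℝ :=
  fun z => (fderiv ℝ u z (1, 0)).1 + (fderiv ℝ u z (0, 1)).2

/-- Bivariate polynomial functions with m coefficients in x and n in y
(i.e. degree < m in x and < n in y); `QfunD 0 n` is the zero space. -/
def QfunD (m n : ℕ) : Set (ℝ × ℝ → ℝ) :=
  {f | ∃ c : Fin m → Fin n → ℝ,
    ∀ x y : ℝ, f (x, y) = ∑ i, ∑ j, c i j * x ^ (i : ℕ) * y ^ (j : ℕ)}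

/-- Bivariate polynomial functions of degree ≤ p in x and ≤ q in y. -/
def Qpoly (p q : ℕ) : Set (ℝ × ℝ → ℝ) := QfunD (p + 1) (q + 1)

/-- Univariate polynomial functions of degree ≤ k. -/
def P1fun (k : ℕ) : Set (ℝ → ℝ) :=
  {g | ∃ c : Fin (k + 1) → ℝ, ∀ t, g t = ∑ i, c i * t ^ (i : ℕ)}

/-- Bivariate polynomial functions of total degree ≤ k. -/
def Pfun (k : ℕ) : Set (ℝ × ℝ → ℝ) :=
  {f | ∃ c : Fin (k + 1) → Fin (k + 1) → ℝ,
    (∀ i j : Fin (k + 1), k < (i : ℕ) + (j : ℕ) → c i j = 0) ∧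
    ∀ x y : ℝ, f (x, y) = ∑ i, ∑ j, c i j * x ^ (i : ℕ) * y ^ (j : ℕ)}

/-- The W^{m,p} Sobolev-type norm built from classical partial derivatives. -/
def SobNorm (m : ℕ) (p : ℝ≥0∞) (μ : Measure (ℝ × ℝ)) (w : ℝ × ℝ → ℝ) : ℝ≥0∞ :=
  ∑ a ∈ Finset.range (m + 1), ∑ b ∈ Finset.range (m + 1 - a),
    eLpNorm (pdx^[a] (pdy^[b] w)) p μ

/-- div ABF_k(K̂) = Q_{k+1}(K̂) \ span{x^{k+1}y^{k+1}}: polynomials of degree ≤ k+1 in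
each variable whose x^{k+1}y^{k+1}-coefficient vanishes. -/
def ABFdivFun (k : ℕ) : Set (ℝ × ℝ → ℝ) :=
  {f | ∃ c : Fin (k + 2) → Fin (k + 2) → ℝ, c (Fin.last (k + 1)) (Fin.last (k + 1)) = 0 ∧
    ∀ x y : ℝ, f (x, y) = ∑ i, ∑ j, c i j * x ^ (i : ℕ) * y ^ (j : ℕ)}

section Calculus

variable {F : ℝ × ℝ → ℝ} {x y : ℝ}

lemma hasDerivAt_pdx (hF : DifferentiableAt ℝ F (x, y)) :
    HasDerivAt (fun t => F (t, y)) (pdx F (x, y)) x :=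
  hF.hasFDerivAt.comp_hasDerivAt x ((hasDerivAt_id x).prodMk (hasDerivAt_const x y))

lemma hasDerivAt_pdy (hF : DifferentiableAt ℝ F (x, y)) :
    HasDerivAt (fun t => F (x, t)) (pdy F (x, y)) y :=
  hF.hasFDerivAt.comp_hasDerivAt y ((hasDerivAt_const y x).prodMk (hasDerivAt_id y))

lemma continuous_pdx (hF : ContDiff ℝ 1 F) : Continuous (pdx F) :=
  hF.continuous_fderiv_apply one_ne_zero |>.comp (continuous_id.prodMk continuous_const)

lemma continuous_pdy (hF : ContDiff ℝ 1 F) : Continuous (pdy F) :=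
  hF.continuous_fderiv_apply one_ne_zero |>.comp (continuous_id.prodMk continuous_const)

lemma pdx_mul {G : ℝ × ℝ → ℝ} {z : ℝ × ℝ} (hF : DifferentiableAt ℝ F z)
    (hG : DifferentiableAt ℝ G z) :
    pdx (fun w => F w * G w) z = pdx F z * G z + F z * pdx G z := by
  simp only [pdx, fderiv_fun_mul hF hG, add_apply, smul_apply, smul_eq_mul]
  ring

lemma pdy_mul {G : ℝ × ℝ → ℝ} {z : ℝ × ℝ} (hF : DifferentiableAt ℝ F z)
    (hG : DifferentiableAt ℝ G z) :
    pdy (fun w => F w * G w) z = pdy F z * G z + F z * pdy G z := by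
  simp only [pdy, fderiv_fun_mul hF hG, add_apply, smul_apply, smul_eq_mul]
  ring

lemma divg_eq_pdx_add_pdy {u : ℝ × ℝ → ℝ × ℝ} {z : ℝ × ℝ} (hu : DifferentiableAt ℝ u z) :
    divg u z = pdx (fun w => (u w).1) z + pdy (fun w => (u w).2) z := by
  simp only [divg, pdx, pdy, hu.hasFDerivAt.fst.fderiv, hu.hasFDerivAt.snd.fderiv]
  rfl

lemma divg_sub {u w : ℝ × ℝ → ℝ × ℝ} {z : ℝ × ℝ} (hu : DifferentiableAt ℝ u z)
    (hw : DifferentiableAt ℝ w z) : divg (u - w) z = divg u z - divg w z := by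
  simp only [divg, fderiv_sub hu hw, sub_apply, Prod.fst_sub, Prod.snd_sub]
  ring

lemma continuous_divg {u : ℝ × ℝ → ℝ × ℝ} (hu : ContDiff ℝ 1 u) : Continuous (divg u) := by
  have h := hu.continuous_fderiv_apply one_ne_zero
  exact (continuous_fst.comp (h.comp (continuous_id.prodMk continuous_const))).add
    (continuous_snd.comp (h.comp (continuous_id.prodMk continuous_const)))

end Calculus

section Integration

instance isFiniteMeasure_μK : IsFiniteMeasure μK := by
  rw [μK]; exact isFiniteMeasure_restrict.mpr isCompact_Icc.measure_lt_top.ne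

lemma Continuous.integrable_μK {f : ℝ × ℝ → ℝ} (hf : Continuous f) : Integrable f μK :=
  hf.continuousOn.integrableOn_compact isCompact_Icc

lemma Continuous.memLp_μK {f : ℝ × ℝ → ℝ} (hf : Continuous f) : MemLp f 2 μK := by
  obtain ⟨C, hC⟩ := isCompact_Icc.exists_bound_of_continuousOn (s := Khat) hf.continuousOn
  refine MemLp.of_bound hf.aestronglyMeasurable C ?_
  filter_upwards [ae_restrict_mem measurableSet_Icc] with z hz using hC z hz

lemma μK_eq_prod :
    μK = (volume.restrict (Set.Icc (0:ℝ) 1)).prod (volume.restrict (Set.Icc (0:ℝ) 1)) := by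
  rw [μK, Khat, Set.Icc_prod_eq, Measure.prod_restrict, Measure.volume_eq_prod]

lemma setIntegral_Icc_zero_one (f : ℝ → ℝ) :
    ∫ t in Set.Icc (0:ℝ) 1, f t = ∫ t in (0:ℝ)..1, f t := by
  rw [integral_Icc_eq_integral_Ioc, intervalIntegral.integral_of_le zero_le_one]

variable {F : ℝ × ℝ → ℝ}

lemma integral_pdx (hF : ContDiff ℝ 1 F) :
    ∫ z, pdx F z ∂μK = ∫ y in (0:ℝ)..1, (F (1, y) - F (0, y)) := by
  have hint : Integrable (pdx F) μK := (continuous_pdx hF).integrable_μK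
  rw [μK_eq_prod] at hint ⊢
  rw [integral_prod_symm _ hint, ← setIntegral_Icc_zero_one]
  refine setIntegral_congr_fun measurableSet_Icc fun y _ => ?_
  rw [setIntegral_Icc_zero_one]
  refine intervalIntegral.integral_eq_sub_of_hasDerivAt
    (fun x _ => hasDerivAt_pdx (hF.differentiable one_ne_zero _)) ?_
  exact ((continuous_pdx hF).comp (continuous_id.prodMk continuous_const)).intervalIntegrable _ _

lemma integral_pdy (hF : ContDiff ℝ 1 F) :
    ∫ z, pdy F z ∂μK = ∫ x in (0:ℝ)..1, (F (x, 1) - F (x, 0)) := by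
  have hint : Integrable (pdy F) μK := (continuous_pdy hF).integrable_μK
  rw [μK_eq_prod] at hint ⊢
  rw [integral_prod _ hint, ← setIntegral_Icc_zero_one]
  refine setIntegral_congr_fun measurableSet_Icc fun x _ => ?_
  rw [setIntegral_Icc_zero_one]
  refine intervalIntegral.integral_eq_sub_of_hasDerivAt
    (fun y _ => hasDerivAt_pdy (hF.differentiable one_ne_zero _)) ?_
  exact ((continuous_pdy hF).comp (continuous_const.prodMk continuous_id)).intervalIntegrable _ _

lemma integral_divg_mul {u : ℝ × ℝ → ℝ × ℝ} {q : ℝ × ℝ → ℝ} (hu : ContDiff ℝ 1 u)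
    (hq : ContDiff ℝ 1 q) :
    ∫ z, divg u z * q z ∂μK =
      (∫ y in (0:ℝ)..1, ((u (1, y)).1 * q (1, y) - (u (0, y)).1 * q (0, y))) +
      (∫ x in (0:ℝ)..1, ((u (x, 1)).2 * q (x, 1) - (u (x, 0)).2 * q (x, 0))) -
      ∫ z, ((u z).1 * pdx q z + (u z).2 * pdy q z) ∂μK := by
  have hu₁ : ContDiff ℝ 1 fun z => (u z).1 * q z := hu.fst.mul hq
  have hu₂ : ContDiff ℝ 1 fun z => (u z).2 * q z := hu.snd.mul hq
  have hpt : ∀ z, divg u z * q z = (pdx (fun w => (u w).1 * q w) z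
      + pdy (fun w => (u w).2 * q w) z) - ((u z).1 * pdx q z + (u z).2 * pdy q z) := fun z => by
    have hd := hu.differentiable one_ne_zero z
    have hqd := hq.differentiable one_ne_zero z
    rw [divg_eq_pdx_add_pdy hd, pdx_mul hd.fst hqd, pdy_mul hd.snd hqd]
    ring
  have h₁ := continuous_pdx hu₁
  have h₂ := continuous_pdy hu₂
  have h₃ := continuous_pdx hq
  have h₄ := continuous_pdy hq
  have huc := hu.continuous
  simp_rw [hpt]
  rw [integral_sub (by fun_prop : Continuous _).integrable_μK
      (by fun_prop : Continuous _).integrable_μK,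
    integral_add h₁.integrable_μK h₂.integrable_μK, integral_pdx hu₁, integral_pdy hu₂]

end Integration

section Polynomials

variable {m n k : ℕ}

def polyFun (c : Fin m → Fin n → ℝ) (z : ℝ × ℝ) : ℝ :=
  ∑ i, ∑ j, c i j * z.1 ^ (i : ℕ) * z.2 ^ (j : ℕ)

lemma mem_QfunD_iff {f : ℝ × ℝ → ℝ} : f ∈ QfunD m n ↔ ∃ c : Fin m → Fin n → ℝ, f = polyFun c :=
  exists_congr fun _ => ⟨fun h => funext fun z => h z.1 z.2, fun h x y => congrFun h (x, y)⟩

lemma mem_ABFdivFun_iff {f : ℝ × ℝ → ℝ} : f ∈ ABFdivFun k ↔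
    ∃ c : Fin (k + 2) → Fin (k + 2) → ℝ, c (Fin.last _) (Fin.last _) = 0 ∧ f = polyFun c :=
  exists_congr fun _ => and_congr_right fun _ =>
    ⟨fun h => funext fun z => h z.1 z.2, fun h x y => congrFun h (x, y)⟩

lemma contDiff_polyFun {N : WithTop ℕ∞} (c : Fin m → Fin n → ℝ) : ContDiff ℝ N (polyFun c) := by
  unfold polyFun; fun_prop

lemma polyFun_add (c d : Fin m → Fin n → ℝ) : polyFun (c + d) = polyFun c + polyFun d := by
  funext z; simp only [polyFun, Pi.add_apply, add_mul, Finset.sum_add_distrib]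

lemma polyFun_sub (c d : Fin m → Fin n → ℝ) : polyFun (c - d) = polyFun c - polyFun d := by
  funext z; simp only [polyFun, Pi.sub_apply, sub_mul, Finset.sum_sub_distrib]

lemma polyFun_snoc_zero (c : Fin m → Fin n → ℝ) :
    polyFun (Fin.snoc (α := fun _ => Fin n → ℝ) c 0) = polyFun c := by
  funext z; simp [polyFun, Fin.sum_univ_castSucc]

lemma polyFun_snoc_zero_right (c : Fin m → Fin n → ℝ) :
    polyFun (fun i => Fin.snoc (α := fun _ => ℝ) (c i) 0) = polyFun c := by
  funext z; simp [polyFun, Fin.sum_univ_castSucc]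

lemma pdx_polyFun (c : Fin (m + 1) → Fin n → ℝ) :
    pdx (polyFun c) = polyFun fun i j => ((i : ℕ) + 1 : ℝ) * c i.succ j := by
  funext ⟨x, y⟩
  have h : HasDerivAt (fun t => polyFun c (t, y))
      (∑ i, ∑ j, c i j * ((i : ℕ) * x ^ ((i : ℕ) - 1)) * y ^ (j : ℕ)) x :=
    HasDerivAt.fun_sum fun i _ => HasDerivAt.fun_sum fun j _ =>
      ((hasDerivAt_pow (i : ℕ) x).const_mul (c i j)).mul_const (y ^ (j : ℕ))
  rw [(hasDerivAt_pdx ((contDiff_polyFun (N := 1) c).differentiable one_ne_zero _)).unique h,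
    polyFun, Fin.sum_univ_succ]
  simp only [Fin.val_zero, Fin.val_succ, CharP.cast_eq_zero, zero_mul, mul_zero,
    Finset.sum_const_zero, zero_add, Nat.add_sub_cancel, Nat.cast_add, Nat.cast_one]
  exact Finset.sum_congr rfl fun i _ => Finset.sum_congr rfl fun j _ => by ring

lemma pdy_polyFun (c : Fin m → Fin (n + 1) → ℝ) :
    pdy (polyFun c) = polyFun fun i j => ((j : ℕ) + 1 : ℝ) * c i j.succ := by
  funext ⟨x, y⟩
  have h : HasDerivAt (fun t => polyFun c (x, t))
      (∑ i, ∑ j, c i j * x ^ (i : ℕ) * ((j : ℕ) * y ^ ((j : ℕ) - 1))) y :=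
    HasDerivAt.fun_sum fun i _ => HasDerivAt.fun_sum fun j _ =>
      (hasDerivAt_pow (j : ℕ) y).const_mul (c i j * x ^ (i : ℕ))
  rw [(hasDerivAt_pdy ((contDiff_polyFun (N := 1) c).differentiable one_ne_zero _)).unique h,
    polyFun]
  refine Finset.sum_congr rfl fun i _ => ?_
  rw [Fin.sum_univ_succ]
  simp only [Fin.val_zero, Fin.val_succ, CharP.cast_eq_zero, zero_mul, mul_zero, zero_add,
    Nat.add_sub_cancel, Nat.cast_add, Nat.cast_one]
  exact Finset.sum_congr rfl fun j _ => by ring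

lemma pdx_mem_QfunD {f : ℝ × ℝ → ℝ} (hf : f ∈ QfunD (m + 1) n) : pdx f ∈ QfunD m n := by
  obtain ⟨c, rfl⟩ := mem_QfunD_iff.mp hf
  exact mem_QfunD_iff.mpr ⟨_, pdx_polyFun c⟩

lemma pdy_mem_QfunD {f : ℝ × ℝ → ℝ} (hf : f ∈ QfunD m (n + 1)) : pdy f ∈ QfunD m n := by
  obtain ⟨c, rfl⟩ := mem_QfunD_iff.mp hf
  exact mem_QfunD_iff.mpr ⟨_, pdy_polyFun c⟩

lemma contDiff_of_mem_QfunD {f : ℝ × ℝ → ℝ} (hf : f ∈ QfunD m n) : ContDiff ℝ 1 f := by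
  obtain ⟨c, rfl⟩ := mem_QfunD_iff.mp hf
  exact contDiff_polyFun c

lemma monomial_mem_QfunD {i j : ℕ} (hi : i < m) (hj : j < n) :
    (fun z : ℝ × ℝ => z.1 ^ i * z.2 ^ j) ∈ QfunD m n := by
  refine mem_QfunD_iff.mpr ⟨fun a b => if a = ⟨i, hi⟩ ∧ b = ⟨j, hj⟩ then 1 else 0,
    funext fun z => ?_⟩
  simp [polyFun, ite_and, ite_mul]

lemma restrict_fst_mem_P1fun {f : ℝ × ℝ → ℝ} (hf : f ∈ QfunD m (k + 1)) (a : ℝ) :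
    (fun t => f (a, t)) ∈ P1fun k := by
  obtain ⟨c, rfl⟩ := mem_QfunD_iff.mp hf
  refine ⟨fun j => ∑ i, c i j * a ^ (i : ℕ), fun t => ?_⟩
  simp only [polyFun, Finset.sum_mul]
  exact Finset.sum_comm

lemma restrict_snd_mem_P1fun {f : ℝ × ℝ → ℝ} (hf : f ∈ QfunD (k + 1) n) (a : ℝ) :
    (fun t => f (t, a)) ∈ P1fun k := by
  obtain ⟨c, rfl⟩ := mem_QfunD_iff.mp hf
  refine ⟨fun i => ∑ j, c i j * a ^ (j : ℕ), fun t => ?_⟩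
  simp only [polyFun, Finset.sum_mul]
  exact Finset.sum_congr rfl fun i _ => Finset.sum_congr rfl fun j _ => by ring

lemma sub_mem_ABFdivFun {f g : ℝ × ℝ → ℝ} (hf : f ∈ ABFdivFun k) (hg : g ∈ ABFdivFun k) :
    f - g ∈ ABFdivFun k := by
  obtain ⟨c, hc, rfl⟩ := mem_ABFdivFun_iff.mp hf
  obtain ⟨d, hd, rfl⟩ := mem_ABFdivFun_iff.mp hg
  exact mem_ABFdivFun_iff.mpr ⟨c - d, by simp [hc, hd], (polyFun_sub c d).symm⟩

lemma continuous_of_mem_ABFdivFun {f : ℝ × ℝ → ℝ} (hf : f ∈ ABFdivFun k) : Continuous f := by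
  obtain ⟨c, -, rfl⟩ := mem_ABFdivFun_iff.mp hf
  exact (contDiff_polyFun (N := 0) c).continuous

lemma divg_mem_ABFdivFun {u : ℝ × ℝ → ℝ × ℝ} (hu₁ : (fun z => (u z).1) ∈ Qpoly (k + 2) k)
    (hu₂ : (fun z => (u z).2) ∈ Qpoly k (k + 2)) : divg u ∈ ABFdivFun k := by
  have hu : ContDiff ℝ 1 u := (contDiff_of_mem_QfunD hu₁).prodMk (contDiff_of_mem_QfunD hu₂)
  obtain ⟨c₁, hc₁⟩ := mem_QfunD_iff.mp hu₁
  obtain ⟨c₂, hc₂⟩ := mem_QfunD_iff.mp hu₂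
  refine mem_ABFdivFun_iff.mpr ⟨(fun i : Fin (k + 2) => Fin.snoc (α := fun _ => ℝ)
      (fun j => ((i : ℕ) + 1 : ℝ) * c₁ i.succ j) 0) +
    Fin.snoc (α := fun _ => Fin (k + 2) → ℝ) (fun i j => ((j : ℕ) + 1 : ℝ) * c₂ i j.succ) 0,
    by simp, ?_⟩  -- neither `∂ₓ` of `Q_{k+2,k}` nor `∂ᵧ` of `Q_{k,k+2}` reaches `x^{k+1}y^{k+1}`
  funext z
  rw [divg_eq_pdx_add_pdy (hu.differentiable one_ne_zero z), polyFun_add, polyFun_snoc_zero,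
    polyFun_snoc_zero_right, hc₁, hc₂, pdx_polyFun, pdy_polyFun, Pi.add_apply]

lemma integral_mul_eq_zero_of_mem_ABFdivFun {D q : ℝ × ℝ → ℝ} (hD : Continuous D)
    (hmono : ∀ i j : Fin (k + 2), ¬(i = Fin.last _ ∧ j = Fin.last _) →
      ∫ z, D z * (z.1 ^ (i : ℕ) * z.2 ^ (j : ℕ)) ∂μK = 0)
    (hq : q ∈ ABFdivFun k) : ∫ z, D z * q z ∂μK = 0 := by
  obtain ⟨c, hc, rfl⟩ := mem_ABFdivFun_iff.mp hq
  have hint : ∀ i j : Fin (k + 2),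
      Integrable (fun z : ℝ × ℝ => c i j * (D z * (z.1 ^ (i : ℕ) * z.2 ^ (j : ℕ)))) μK :=
    fun i j => (continuous_const.mul (hD.mul (by fun_prop))).integrable_μK
  have hexpand : ∀ z, D z * polyFun c z =
      ∑ i, ∑ j, c i j * (D z * (z.1 ^ (i : ℕ) * z.2 ^ (j : ℕ))) := fun z => by
    simp only [polyFun, Finset.mul_sum]
    exact Finset.sum_congr rfl fun i _ => Finset.sum_congr rfl fun j _ => by ring
  simp_rw [hexpand]
  rw [integral_finsetSum _ fun i _ => integrable_finsetSum _ fun j _ => hint i j]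
  refine Finset.sum_eq_zero fun i _ => ?_
  rw [integral_finsetSum _ fun j _ => hint i j]
  refine Finset.sum_eq_zero fun j _ => ?_
  rw [integral_const_mul]
  by_cases hij : i = Fin.last _ ∧ j = Fin.last _
  · rw [hij.1, hij.2, hc, zero_mul]
  · rw [hmono i j hij, mul_zero]

end Polynomials

section ABF

variable {k : ℕ}

lemma integral_divg_mul_eq_zero_of_moments {u : ℝ × ℝ → ℝ × ℝ} (hu : ContDiff ℝ 1 u)
    (hedge : ∀ g ∈ P1fun k,
      (∫ t in (0:ℝ)..1, (u (0, t)).1 * g t) = 0 ∧ (∫ t in (0:ℝ)..1, (u (1, t)).1 * g t) = 0 ∧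
      (∫ t in (0:ℝ)..1, (u (t, 0)).2 * g t) = 0 ∧ (∫ t in (0:ℝ)..1, (u (t, 1)).2 * g t) = 0)
    (hint : ∀ q₁ ∈ QfunD k (k + 1), ∀ q₂ ∈ QfunD (k + 1) k,
      ∫ z, ((u z).1 * q₁ z + (u z).2 * q₂ z) ∂μK = 0)
    {q : ℝ × ℝ → ℝ} (hq : q ∈ Qpoly k k) : ∫ z, divg u z * q z ∂μK = 0 := by
  have hqc : ContDiff ℝ 1 q := contDiff_of_mem_QfunD hq
  have huc := hu.continuous
  have hqc' := hqc.continuous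
  obtain ⟨hx0, -, -, -⟩ := hedge _ (restrict_fst_mem_P1fun hq 0)
  obtain ⟨-, hx1, -, -⟩ := hedge _ (restrict_fst_mem_P1fun hq 1)
  obtain ⟨-, -, hy0, -⟩ := hedge _ (restrict_snd_mem_P1fun hq 0)
  obtain ⟨-, -, -, hy1⟩ := hedge _ (restrict_snd_mem_P1fun hq 1)
  rw [integral_divg_mul hu hqc, intervalIntegral.integral_sub, intervalIntegral.integral_sub,
    hx0, hx1, hy0, hy1, hint _ (pdx_mem_QfunD hq) _ (pdy_mem_QfunD hq)]
  · ring
  all_goals exact Continuous.intervalIntegrable (by fun_prop) _ _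

lemma ae_eq_of_orthogonal_ABFdivFun {f g w : ℝ × ℝ → ℝ} (hf : f ∈ ABFdivFun k)
    (hg : g ∈ ABFdivFun k) (hw : Continuous w)
    (hfw : ∀ q ∈ ABFdivFun k, ∫ z, (f z - w z) * q z ∂μK = 0)
    (hwg : ∀ q ∈ ABFdivFun k, ∫ z, (w z - g z) * q z ∂μK = 0) : f =ᵐ[μK] g := by
  have he := sub_mem_ABFdivFun hf hg
  have hfc := continuous_of_mem_ABFdivFun hf
  have hgc := continuous_of_mem_ABFdivFun hg
  have hsq : ∫ z, (f z - g z) * (f z - g z) ∂μK = 0 := by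
    have hsplit : ∀ z, (f z - g z) * (f z - g z) =
        (f z - w z) * (f - g) z + (w z - g z) * (f - g) z := fun z => by
      simp only [Pi.sub_apply]; ring
    simp_rw [hsplit]
    rw [integral_add (by fun_prop : Continuous _).integrable_μK
      (by fun_prop : Continuous _).integrable_μK, hfw _ he, hwg _ he, add_zero]
  filter_upwards [(integral_eq_zero_iff_of_nonneg (fun z => mul_self_nonneg (f z - g z))
    (by fun_prop : Continuous _).integrable_μK).mp hsq] with z hz
  exact sub_eq_zero.mp (mul_self_eq_zero.mp hz)

end ABF

/-- The Arnold–Boffi–Falk interpolation operator, defined by its edge, interior and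
divergence moments, satisfies the commuting diagram property
div(Î_{ABF} v) = Π(div v), where Π is the L²-projection onto div ABF_k(K̂). -/
theorem ABF_commuting_diagram (k : ℕ)
    (I : (ℝ × ℝ → ℝ × ℝ) → (ℝ × ℝ → ℝ × ℝ))
    (Pr : (ℝ × ℝ → ℝ) → (ℝ × ℝ → ℝ))
    (hPrmem : ∀ w, Pr w ∈ ABFdivFun k)
    (hProrth : ∀ w, MemLp w 2 μK → ∀ q ∈ ABFdivFun k, ∫ z, (w z - Pr w z) * q z ∂μK = 0)
    (v : ℝ × ℝ → ℝ × ℝ) (hv : ContDiff ℝ 1 v)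
    -- Î_{ABF} v belongs to ABF_k(K̂) = Q_{k+2,k} × Q_{k,k+2}:
    (hIv1 : (fun z => (I v z).1) ∈ Qpoly (k + 2) k)
    (hIv2 : (fun z => (I v z).2) ∈ Qpoly k (k + 2))
    -- edge moments: ∫_F (Î_{ABF}v − v)·n q = 0 for all q ∈ P_k(F) on each edge F:
    (hedge : ∀ g ∈ P1fun k,
      (∫ t in (0:ℝ)..1, ((I v (0, t)).1 - (v (0, t)).1) * g t) = 0 ∧
      (∫ t in (0:ℝ)..1, ((I v (1, t)).1 - (v (1, t)).1) * g t) = 0 ∧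
      (∫ t in (0:ℝ)..1, ((I v (t, 0)).2 - (v (t, 0)).2) * g t) = 0 ∧
      (∫ t in (0:ℝ)..1, ((I v (t, 1)).2 - (v (t, 1)).2) * g t) = 0)
    -- interior moments against Q_{k-1,k} × Q_{k,k-1}:
    (hint : ∀ q₁ ∈ QfunD k (k + 1), ∀ q₂ ∈ QfunD (k + 1) k,
      ∫ z, (((I v z).1 - (v z).1) * q₁ z + ((I v z).2 - (v z).2) * q₂ z) ∂μK = 0)
    -- divergence moments against x^i y^{k+1}, 0 ≤ i ≤ k:
    (hdiv1 : ∀ i : Fin (k + 1),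
      ∫ z, (divg (I v) z - divg v z) * (z.1 ^ (i : ℕ) * z.2 ^ (k + 1)) ∂μK = 0)
    -- divergence moments against x^{k+1} y^j, 0 ≤ j ≤ k:
    (hdiv2 : ∀ j : Fin (k + 1),
      ∫ z, (divg (I v) z - divg v z) * (z.1 ^ (k + 1) * z.2 ^ (j : ℕ)) ∂μK = 0) :
    divg (I v) =ᵐ[μK] Pr (divg v) := by
  have hIv : ContDiff ℝ 1 (I v) :=
    (contDiff_of_mem_QfunD hIv1).prodMk (contDiff_of_mem_QfunD hIv2)
  have hdivv := continuous_divg hv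
  refine ae_eq_of_orthogonal_ABFdivFun (divg_mem_ABFdivFun hIv1 hIv2) (hPrmem _) hdivv ?_
    (hProrth _ hdivv.memLp_μK)
  refine fun q hq => integral_mul_eq_zero_of_mem_ABFdivFun ((continuous_divg hIv).sub hdivv) ?_ hq
  intro i j hij
  rcases Fin.eq_castSucc_or_eq_last i with ⟨i, rfl⟩ | rfl <;>
    rcases Fin.eq_castSucc_or_eq_last j with ⟨j, rfl⟩ | rfl
  · have hdiff : ∀ z, divg (I v) z - divg v z = divg (I v - v) z := fun z =>
      (divg_sub (hIv.differentiable one_ne_zero z) (hv.differentiable one_ne_zero z)).symm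
    simp_rw [hdiff]
    exact integral_divg_mul_eq_zero_of_moments (hIv.sub hv) hedge hint
      (monomial_mem_QfunD i.is_lt j.is_lt)
  · exact hdiv1 i
  · exact hdiv2 j
  · exact absurd ⟨rfl, rfl⟩ hij
end
end
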